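/- Let a, b, c be integers with a > 0, a ∣ b and b ∣ c, and let ω = a·(e₁∧e₂) + b·(e₃∧e₄) + c·(e₅∧e₆) ∈ ⋀²(ℤ⁶). Then the torsion subgroup of the quotient abelian group ⋀²(ℤ⁶)/⟨ω⟩ (the quotient by the subgroup generated by ω) is a finite group of order a. -/

import Mathlib

/-!
With `b = a b'` and `c = a b' c'` we have `ω = a • ω₀` for
`ω₀ = e₁∧e₂ + b'·e₃∧e₄ + b'c'·e₅∧e₆`, and the `(1, 2)`-minor is a linear form on `⋀²(ℤ⁶)`
taking the value `1` at `ω₀`. So `ℤ ω₀` is a direct summand of the free module `⋀²(ℤ⁶)`: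
if `n • y ∈ ℤ ω` with `n ≠ 0`, then `y` is a multiple of `ω₀`, and the torsion of the quotient
is the cyclic group `ℤ ω₀ / ℤ a ω₀ ≅ ℤ/a`.
-/

open ExteriorAlgebra

/-- The image in the exterior algebra of the `i`-th standard basis vector of `ℤⁿ`. -/
noncomputable def e {n : ℕ} (i : Fin n) : ExteriorAlgebra ℤ (Fin n → ℤ) :=
  ι ℤ (Pi.single i 1)

/-- The element `ω = a·(e₁∧e₂) + b·(e₃∧e₄) + c·(e₅∧e₆)` of the exterior algebra. -/
noncomputable def omeg (a b c : ℤ) : ExteriorAlgebra ℤ (Fin 6 → ℤ) :=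
  a • (e 0 * e 1) + b • (e 2 * e 3) + c • (e 4 * e 5)

lemma mem_two (v w : Fin 6 → ℤ) : ι ℤ v * ι ℤ w ∈ ⋀[ℤ]^2 (Fin 6 → ℤ) := by
  rw [show (⋀[ℤ]^2 (Fin 6 → ℤ)) = LinearMap.range (ι ℤ (M := Fin 6 → ℤ)) *
    LinearMap.range (ι ℤ (M := Fin 6 → ℤ)) from sq _]
  exact Submodule.mul_mem_mul (LinearMap.mem_range_self _ v) (LinearMap.mem_range_self _ w)

lemma omeg_mem (a b c : ℤ) : omeg a b c ∈ ⋀[ℤ]^2 (Fin 6 → ℤ) :=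
  Submodule.add_mem _
    (Submodule.add_mem _ (Submodule.smul_mem _ _ (mem_two _ _))
      (Submodule.smul_mem _ _ (mem_two _ _)))
    (Submodule.smul_mem _ _ (mem_two _ _))

open Module Submodule

section TorsionOfQuotient

variable {R M : Type*} [CommRing R] [AddCommGroup M] [Module R M]
  {x : M} {φ : Dual R M} {a : R}

theorem ker_mkQ_comp_toSpanSingleton_smul (hx : φ x = 1) :
    LinearMap.ker ((R ∙ (a • x)).mkQ ∘ₗ LinearMap.toSpanSingleton R M x) = R ∙ a := by
  ext n
  simp only [LinearMap.mem_ker, LinearMap.comp_apply, LinearMap.toSpanSingleton_apply, mkQ_apply,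
    Quotient.mk_eq_zero, mem_span_singleton, smul_smul, smul_eq_mul]
  constructor
  · rintro ⟨m, hm⟩
    exact ⟨m, by simpa [hx] using congrArg φ hm⟩
  · rintro ⟨m, rfl⟩
    exact ⟨m, rfl⟩

variable [IsDomain R] [IsTorsionFree R M]

theorem range_mkQ_comp_toSpanSingleton_smul (hx : φ x = 1) (ha : a ≠ 0) :
    LinearMap.range ((R ∙ (a • x)).mkQ ∘ₗ LinearMap.toSpanSingleton R M x) =
      torsion R (M ⧸ (R ∙ (a • x))) := by
  ext z
  rw [LinearMap.mem_range, mem_torsion_iff]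
  constructor
  · rintro ⟨n, rfl⟩
    refine ⟨⟨a, mem_nonZeroDivisors_of_ne_zero ha⟩, ?_⟩
    show a • (R ∙ (a • x)).mkQ (n • x) = 0
    rw [← map_smul, smul_comm, mkQ_apply, Quotient.mk_eq_zero]
    exact smul_mem _ _ (mem_span_singleton_self _)
  · rintro ⟨⟨n, hn⟩, hnz⟩
    obtain ⟨y, rfl⟩ := mkQ_surjective _ z
    obtain ⟨m, hm⟩ : ∃ m : R, m • a • x = n • y := by
      rw [← mem_span_singleton, ← Quotient.mk_eq_zero]
      exact hnz
    have hφ : m * a = n * φ y := by simpa [hx, smul_smul] using congrArg φ hm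
    have : n • (φ y • x) = n • y := by rw [smul_smul, ← hφ, ← smul_smul, hm]
    exact ⟨φ y, congrArg _ (smul_right_injective M (nonZeroDivisors.ne_zero hn) this)⟩

noncomputable def torsionQuotientSpanSmulEquiv (hx : φ x = 1) (ha : a ≠ 0) :
    (R ⧸ (R ∙ a)) ≃ₗ[R] torsion R (M ⧸ (R ∙ (a • x))) :=
  (quotEquivOfEq _ _ (ker_mkQ_comp_toSpanSingleton_smul hx).symm).trans <|
    (LinearMap.quotKerEquivRange _).trans <|
      LinearEquiv.ofEq _ _ (range_mkQ_comp_toSpanSingleton_smul hx ha)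

end TorsionOfQuotient

section Minor

variable {n : ℕ}

noncomputable def minor (i j : Fin n) : Dual ℤ (⋀[ℤ]^2 (Fin n → ℤ)) :=
  exteriorPower.pairingDual ℤ (Fin n → ℤ) 2
    (exteriorPower.ιMulti ℤ 2 ![LinearMap.proj i, LinearMap.proj j])

theorem minor_ιMulti (i j : Fin n) (v w : Fin n → ℤ) :
    minor i j (exteriorPower.ιMulti ℤ 2 ![v, w]) = v i * w j - v j * w i := by
  simp [minor, Matrix.det_fin_two]

end Minor

theorem smul_omeg (r a b c : ℤ) : r • omeg a b c = omeg (r * a) (r * b) (r * c) := by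
  simp only [omeg, smul_add, smul_smul]

theorem mk_omeg (a b c : ℤ) :
    (⟨omeg a b c, omeg_mem a b c⟩ : ⋀[ℤ]^2 (Fin 6 → ℤ)) =
      a • exteriorPower.ιMulti ℤ 2 ![Pi.single 0 1, Pi.single 1 1] +
      b • exteriorPower.ιMulti ℤ 2 ![Pi.single 2 1, Pi.single 3 1] +
      c • exteriorPower.ιMulti ℤ 2 ![Pi.single 4 1, Pi.single 5 1] := by
  ext
  simp [omeg, e]

theorem minor_zero_one_omeg (a b c : ℤ) : minor 0 1 ⟨omeg a b c, omeg_mem a b c⟩ = a := by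
  simp [mk_omeg, minor_ιMulti]

/-- If `a > 0`, `a ∣ b` and `b ∣ c`, then the torsion subgroup of the quotient of
`⋀²(ℤ⁶)` by the subgroup generated by `ω = a·(e₁∧e₂) + b·(e₃∧e₄) + c·(e₅∧e₆)` is
finite of order `a`. -/
theorem torsion_of_quotient (a b c : ℤ) (ha : 0 < a) (hab : a ∣ b) (hbc : b ∣ c) :
    (Nat.card (Submodule.torsion ℤ
      ((⋀[ℤ]^2 (Fin 6 → ℤ)) ⧸
        Submodule.span ℤ {(⟨omeg a b c, omeg_mem a b c⟩ : ⋀[ℤ]^2 (Fin 6 → ℤ))})) : ℤ) = a := by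
  obtain ⟨b, rfl⟩ := hab
  obtain ⟨c, rfl⟩ := hbc
  have hω : (⟨omeg a (a * b) (a * b * c), omeg_mem _ _ _⟩ : ⋀[ℤ]^2 (Fin 6 → ℤ)) =
      a • ⟨omeg 1 b (b * c), omeg_mem _ _ _⟩ := by
    ext
    simp only [SetLike.val_smul, smul_omeg, mul_one, mul_assoc]
  rw [hω, ← Nat.card_congr
      (torsionQuotientSpanSmulEquiv (minor_zero_one_omeg _ _ _) ha.ne').toEquiv,
    Nat.card_congr (Int.quotientSpanEquivZMod a).toEquiv, Nat.card_zmod]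
  exact Int.natAbs_of_nonneg ha.le
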